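/- For the sl_3 case with n = p = q = 1 and b(0) = (1 - t3/t1)/((1 - t2/t1)(1 - t3/t2)), the coefficient of e^{[[λ, μ, ν]]} = t1^{-μ} t2^{λ} t3^{ν} in b(0) equals 1 if (λ = μ ≥ 0 and ν = 0) or (λ = -ν < 0 and μ = 0), and equals 0 for all other integer triples (λ, μ, ν) with μ, ν ≥ 0. -/

import Mathlib

/-!
Since `1 - X₀X₁ = (1 - X₀) + (1 - X₁) - (1 - X₀)(1 - X₁)`, dividing by the unit
`(1 - X₀)(1 - X₁)` gives `F = 1/(1 - X₀) + 1/(1 - X₁) - 1`. The coefficient of `X₀^μ X₁^ν` is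
therefore `[ν = 0] + [μ = 0] - [μ = ν = 0]`, i.e. `1` exactly on the coordinate axes, which is the
claimed pattern once `λ = μ - ν`.
-/

open Finsupp

namespace MvPowerSeries

variable {σ R : Type*} [CommRing R]

noncomputable def geomX (i : σ) : MvPowerSeries σ R :=
  rename (Function.Embedding.punit i) (PowerSeries.mk 1)

theorem geomX_mul_one_sub_X (i : σ) : geomX i * (1 - X i) = (1 : MvPowerSeries σ R) := by
  have h := congrArg (rename (R := R) (Function.Embedding.punit i))
    (PowerSeries.mk_one_mul_one_sub_eq_one R)
  rwa [map_mul, map_sub, map_one, show (PowerSeries.X : PowerSeries R) = X () from rfl,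
    rename_X] at h

theorem coeff_geomX [DecidableEq σ] (i : σ) (d : σ →₀ ℕ) :
    coeff d (geomX (R := R) i) = if d = single i (d i) then 1 else 0 := by
  split_ifs with hd
  · rw [hd, geomX, show single i (d i) = embDomain (Function.Embedding.punit i) (single () (d i))
      by rw [embDomain_single]; rfl, coeff_embDomain_rename]
    exact PowerSeries.coeff_mk _ _
  · refine coeff_rename_eq_zero _ _ ?_
    rintro ⟨e, rfl⟩
    obtain ⟨n, rfl⟩ : ∃ n, e = single PUnit.unit n := ⟨_, Finsupp.unique_single e⟩
    rw [mapDomain_single] at hd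
    exact hd (congrArg (single i) (single_eq_same (a := i) (b := n)).symm)

theorem coeff_single_add_single_geomX [DecidableEq σ] {i j : σ} (hij : i ≠ j) (a b : ℕ) :
    coeff (single i a + single j b) (geomX (R := R) i) = if b = 0 then 1 else 0 := by
  rw [coeff_geomX]
  congr 1
  apply propext
  simp [Finsupp.ext_iff, single_apply, hij]

theorem eq_geomX_add_geomX_sub_one {i j : σ} {F : MvPowerSeries σ R}
    (hF : F * ((1 - X i) * (1 - X j)) = 1 - X i * X j) :
    F = geomX i + geomX j - 1 := by
  have hunit : IsUnit ((1 - X i) * (1 - X j) : MvPowerSeries σ R) := by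
    simp [isUnit_iff_constantCoeff]
  refine hunit.mul_right_cancel (hF.trans ?_)
  linear_combination (X j - 1) * geomX_mul_one_sub_X (R := R) i
    + (X i - 1) * geomX_mul_one_sub_X (R := R) j

theorem coeff_single_add_single_of_mul_eq [DecidableEq σ] {i j : σ} (hij : i ≠ j)
    {F : MvPowerSeries σ R} (hF : F * ((1 - X i) * (1 - X j)) = 1 - X i * X j) (a b : ℕ) :
    coeff (single i a + single j b) F = if a = 0 ∨ b = 0 then 1 else 0 := by
  rw [eq_geomX_add_geomX_sub_one hF, map_sub, map_add, coeff_single_add_single_geomX hij,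
    add_comm (single i a), coeff_single_add_single_geomX hij.symm, coeff_one]
  simp only [add_eq_zero, single_eq_zero]
  by_cases ha : a = 0 <;> by_cases hb : b = 0 <;> simp [ha, hb]

end MvPowerSeries

theorem stmt11 (F : MvPowerSeries (Fin 2) ℤ)
    (hF : F * ((1 - MvPowerSeries.X (0 : Fin 2)) * (1 - MvPowerSeries.X (1 : Fin 2)))
      = 1 - MvPowerSeries.X (0 : Fin 2) * MvPowerSeries.X (1 : Fin 2))
    (lam : ℤ) (mu nu : ℕ) :
    (if lam = (mu : ℤ) - (nu : ℤ) then
        MvPowerSeries.coeff (R := ℤ) (Finsupp.single (0 : Fin 2) mu + Finsupp.single (1 : Fin 2) nu) F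
      else 0)
      = if (lam = (mu : ℤ) ∧ nu = 0) ∨ (lam = -(nu : ℤ) ∧ lam < 0 ∧ mu = 0)
        then 1 else 0 := by
  rw [MvPowerSeries.coeff_single_add_single_of_mul_eq (by decide) hF]
  split_ifs <;> omega
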